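/- arXiv:1308.5128 — 6 statements merged into one kernel-verified Lean document; each statement's English description precedes it below -/
import Mathlib

section
/- Let G be a graph, φ a vertex colouring, v a uniquely coloured vertex, and P a simple path in G passing through v. If the restriction of φ to each of the two subpaths of P obtained by deleting v is non-repetitive, then the colour sequence of P itself is non-repetitive. -/
/-! A repetition `X ++ X` in the colour sequence that contains `φ v` contains it twice, whereas
`φ v` occurs only once along the path. A repetition avoiding `φ v` lies strictly on one side of
`v`, hence inside one of the two non-repetitive subpaths. -/

/-- A list is non-repetitive if no nonempty block `X ++ X` occurs as a block
of consecutive terms. -/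
def IsNonrepetitive {α : Type*} (l : List α) : Prop :=
  ∀ X : List α, X ≠ [] → ¬ (X ++ X) <:+: l

namespace List

variable {α : Type*} {c : α} {t u w : List α}

theorem IsPrefix.eq_nil_of_head_notMem (h : t <+: c :: w) (hc : c ∉ t) : t = [] := by
  rcases prefix_cons_iff.mp h with rfl | ⟨s, rfl, -⟩
  · rfl
  · exact absurd mem_cons_self hc

theorem IsInfix.infix_or_infix_of_notMem (h : t <:+: u ++ c :: w) (hc : c ∉ t) :
    t <:+: u ∨ t <:+: w := by
  rcases infix_append_iff.mp h with h | h | ⟨t₁, t₂, rfl, h₁, h₂⟩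
  · exact .inl h
  · rcases infix_cons_iff.mp h with h | h
    · exact .inl (h.eq_nil_of_head_notMem hc ▸ nil_infix)
    · exact .inr h
  · obtain rfl : t₂ = [] := h₂.eq_nil_of_head_notMem fun h => hc (mem_append_right _ h)
    exact .inl (by simpa using h₁.isInfix)

end List

theorem IsNonrepetitive.append_cons {α : Type*} {l₁ l₂ : List α} {c : α}
    (h₁ : IsNonrepetitive l₁) (h₂ : IsNonrepetitive l₂) (hc₁ : c ∉ l₁) (hc₂ : c ∉ l₂) :
    IsNonrepetitive (l₁ ++ c :: l₂) := by
  classical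
  intro X hX hXX
  by_cases hcX : c ∈ X
  · have hcount : (l₁ ++ c :: l₂).count c = 1 := by
      simp [List.count_eq_zero_of_not_mem hc₁, List.count_eq_zero_of_not_mem hc₂]
    have hle := hXX.sublist.count_le c
    rw [hcount, List.count_append] at hle
    have := List.count_pos_iff.mpr hcX
    omega
  · rcases hXX.infix_or_infix_of_notMem (by simp [hcX]) with h | h
    · exact h₁ X hX h
    · exact h₂ X hX h

theorem nonrepetitive_path_through_uniquely_coloured_vertex_general
    {V β : Type*} (G : SimpleGraph V) (φ : V → β) (v : V)
    (a b : V) (p : G.Walk a b) (hp : p.IsPath)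
    (hunique : ∀ u ∈ p.support, u ≠ v → φ u ≠ φ v)
    (L1 L2 : List V) (hsplit : p.support = L1 ++ v :: L2)
    (h1 : IsNonrepetitive (L1.map φ))
    (h2 : IsNonrepetitive (L2.map φ)) :
    IsNonrepetitive (p.support.map φ) := by
  have hv : v ∉ L1 ++ L2 :=
    (List.nodup_cons.mp (List.nodup_middle.mp (hsplit ▸ hp.support_nodup))).1
  have hcolour : ∀ u ∈ L1 ++ L2, φ u ≠ φ v := fun u hu =>
    hunique u (by simp only [hsplit, List.mem_append, List.mem_cons] at hu ⊢; tauto)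
      (ne_of_mem_of_not_mem hu hv)
  rw [hsplit, List.map_append, List.map_cons]
  refine h1.append_cons h2 (fun hmem => ?_) (fun hmem => ?_) <;>
    obtain ⟨u, hu, hφ⟩ := List.mem_map.mp hmem <;>
    exact hcolour u (by simp [hu]) hφ

/-- If `v` is uniquely coloured on a simple path `P` through `v`, and the two
subpaths of `P` obtained by deleting `v` have non-repetitive colour sequences,
then the colour sequence of `P` itself is non-repetitive. -/
theorem nonrepetitive_path_through_uniquely_coloured_vertex
    {V β : Type*} (G : SimpleGraph V) (φ : V → β) (v : V)
    (a b : V) (p : G.Walk a b) (hp : p.IsPath)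
    (hv : v ∈ p.support)
    (hunique : ∀ u ∈ p.support, u ≠ v → φ u ≠ φ v)
    (L1 L2 : List V) (hsplit : p.support = L1 ++ v :: L2)
    (h1 : IsNonrepetitive (L1.map φ))
    (h2 : IsNonrepetitive (L2.map φ)) :
    IsNonrepetitive (p.support.map φ) :=
  nonrepetitive_path_through_uniquely_coloured_vertex_general G φ v a b p hp hunique L1 L2 hsplit h1
    h2
end

section
/- Suppose that for every graph-theoretic path P and every assignment of lists of size 4 to its vertices there exists a non-repetitive colouring from the lists. Then for every cycle C_n and every assignment of lists of size at least 5 to its vertices, there exists a colouring from the lists such that the colour sequence of every path of consecutive vertices along the cycle is non-repetitive. -/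
variable {α : Type*}

theorem IsNonrepetitive.infix {l₁ l₂ : List α} (hl : IsNonrepetitive l₂)
    (h : l₁ <:+: l₂) : IsNonrepetitive l₁ :=
  fun X hX hXX => hl X hX (hXX.trans h)

theorem List.infix_or_infix_of_infix_append_cons {X u v : List α} {a : α}
    (h : X <:+: u ++ a :: v) (ha : a ∉ X) : X <:+: u ∨ X <:+: v := by
  rcases List.infix_append_iff.mp h with hu | hv | ⟨l₁, l₂, rfl, hl₁, hl₂⟩
  · exact .inl hu
  · rcases List.infix_cons_iff.mp hv with hpre | hv
    · rcases List.prefix_cons_iff.mp hpre with rfl | ⟨t, rfl, -⟩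
      · exact .inl List.nil_infix
      · exact absurd List.mem_cons_self ha
    · exact .inr hv
  · rcases List.prefix_cons_iff.mp hl₂ with rfl | ⟨t, rfl, -⟩
    · exact .inl (by simpa using hl₁.isInfix)
    · simp at ha

theorem List.exists_rotate_cons_eq_append_cons (a : α) (P : List α) (s : ℕ) :
    ∃ u v, v ++ u = P ∧ (a :: P).rotate s = u ++ a :: v := by
  rw [List.rotate_eq_drop_append_take_mod]
  cases s % (a :: P).length with
  | zero => exact ⟨[], P, by simp, by simp⟩
  | succ m => exact ⟨P.drop m, P.take m, P.take_append_drop m, by simp⟩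

theorem IsNonrepetitive.rotate_cons [DecidableEq α] {a : α} {P : List α} (ha : a ∉ P)
    (hP : IsNonrepetitive P) (s : ℕ) : IsNonrepetitive ((a :: P).rotate s) := by
  intro X hX hXX
  have hcount : 2 * X.count a ≤ 1 :=
    calc 2 * X.count a = (X ++ X).count a := by rw [List.count_append]; ring
      _ ≤ ((a :: P).rotate s).count a := hXX.sublist.count_le a
      _ = 1 := by rw [((a :: P).rotate_perm s).count_eq, List.count_cons_self,
          List.count_eq_zero.mpr ha]
  have haX : a ∉ X ++ X := by
    rw [← List.count_pos_iff, List.count_append]; omega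
  obtain ⟨u, v, rfl, hrot⟩ := List.exists_rotate_cons_eq_append_cons a P s
  rw [hrot] at hXX
  rcases List.infix_or_infix_of_infix_append_cons hXX haX with hu | hv
  · exact hP X hX (hu.trans List.infix_append_right)
  · exact hP X hX (hv.trans List.infix_append_left)

theorem List.map_range_getD_eq_take_rotate {n : ℕ} [NeZero n] (l : List α) (hl : l.length = n)
    (d : α) (i : ZMod n) {k : ℕ} (hk : k ≤ n) :
    (List.range k).map (fun j => l.getD (i + (j : ZMod n)).val d) = (l.rotate i.val).take k := by
  -- The cast `(j : ZMod n)` elaborates by lifting `List.range k` into the list monad.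
  simp only [List.pure_def, List.bind_eq_flatMap, ← List.map_eq_flatMap, List.map_map]
  apply List.ext_getElem (by simp [hl, hk])
  intro j hj _
  simp only [List.length_map, List.length_range] at hj
  rw [List.getElem_map, List.getElem_range, List.getElem_take, List.getElem_rotate,
    Function.comp_apply, ZMod.val_add, ZMod.val_natCast, Nat.mod_eq_of_lt (by omega : j < n),
    List.getD_eq_getElem _ _ (by rw [hl]; exact Nat.mod_lt _ (NeZero.pos n))]
  simp only [hl, add_comm]

def PathsNonrepetitivelyChoosable (k : ℕ) : Prop :=
  ∀ (m : ℕ) (L : Fin m → Finset ℕ), (∀ i, (L i).card = k) →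
    ∃ c : Fin m → ℕ, (∀ i, c i ∈ L i) ∧ IsNonrepetitive (List.ofFn c)

theorem PathsNonrepetitivelyChoosable.exists_avoiding {k : ℕ}
    (hpath : PathsNonrepetitivelyChoosable k) {m : ℕ} (L : Fin m → Finset ℕ)
    (hL : ∀ i, k + 1 ≤ (L i).card) (a : ℕ) :
    ∃ c : Fin m → ℕ, (∀ i, c i ∈ L i ∧ c i ≠ a) ∧ IsNonrepetitive (List.ofFn c) := by
  have hsub : ∀ i, ∃ t ⊆ (L i).erase a, t.card = k := fun i =>
    Finset.exists_subset_card_eq <| by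
      have := Finset.pred_card_le_card_erase (a := a) (s := L i)
      have := hL i
      omega
  choose L' hL'sub hL'card using hsub
  obtain ⟨c, hc, hrep⟩ := hpath m L' hL'card
  exact ⟨c, fun i => (Finset.mem_erase.mp (hL'sub i (hc i))).symm, hrep⟩

theorem List.getD_cons_ofFn_val_mem {β : Type*} {n : ℕ} [NeZero n] {S : ZMod n → Finset β}
    {a : β} {c : Fin (n - 1) → β} (ha : a ∈ S 0)
    (hc : ∀ j : Fin (n - 1), c j ∈ S (((j : ℕ) + 1 : ℕ) : ZMod n))
    (d : β) (x : ZMod n) : (a :: List.ofFn c).getD x.val d ∈ S x := by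
  rcases hx : x.val with _ | j
  · rwa [List.getD_cons_zero, (ZMod.val_eq_zero x).mp hx]
  · have hj : j < n - 1 := by have := ZMod.val_lt x; omega
    have hxj : ((j + 1 : ℕ) : ZMod n) = x := by rw [← hx, ZMod.natCast_zmod_val]
    rw [List.getD_cons_succ, List.getD_eq_getElem _ _ (by simpa using hj), List.getElem_ofFn,
      ← hxj]
    exact hc ⟨j, hj⟩

/-- Assuming paths are non-repetitively colourable from lists of size 4,
every cycle `Cₙ` is facially non-repetitively colourable from lists of size
at least 5: every path of consecutive vertices along the cycle gets a
non-repetitive colour sequence. -/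
theorem cycle_facially_nonrepetitive_5_choosable
    (hpath : ∀ (m : ℕ) (L : Fin m → Finset ℕ), (∀ i, (L i).card = 4) →
      ∃ c : Fin m → ℕ, (∀ i, c i ∈ L i) ∧ IsNonrepetitive (List.ofFn c)) :
    ∀ (n : ℕ), 3 ≤ n → ∀ (L : ZMod n → Finset ℕ), (∀ i, 5 ≤ (L i).card) →
      ∃ c : ZMod n → ℕ, (∀ i, c i ∈ L i) ∧
        ∀ (i : ZMod n) (k : ℕ), k ≤ n →
          IsNonrepetitive ((List.range k).map (fun j => c (i + (j : ZMod n)))) := by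
  intro n hn L hL
  have : NeZero n := ⟨by omega⟩
  obtain ⟨a, ha⟩ : (L 0).Nonempty := Finset.card_pos.mp (by have := hL 0; omega)
  obtain ⟨c, hc, hrep⟩ := PathsNonrepetitivelyChoosable.exists_avoiding hpath
    (fun j : Fin (n - 1) => L (((j : ℕ) + 1 : ℕ) : ZMod n)) (fun _ => hL _) a
  have haP : a ∉ List.ofFn c := by
    rw [List.mem_ofFn]; rintro ⟨j, hj⟩; exact (hc j).2 hj
  refine ⟨fun x => (a :: List.ofFn c).getD x.val 0,
    List.getD_cons_ofFn_val_mem ha (fun j => (hc j).1) 0, fun i k hk => ?_⟩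
  rw [List.map_range_getD_eq_take_rotate _ (by simp; omega) 0 i hk]
  exact (hrep.rotate_cons haP i.val).infix (List.take_prefix _ _).isInfix
end

section
/- Let (a_m) be a sequence of real numbers satisfying, for all m ≥ 2, the relation a_m = a_{m-1} + 2Δ·a_{m-2} + 2Δ·2·a_{m-3} + ... + 2Δ·(m-2)·a_1 + 2Δ·(m-1) + 2Δ·m, i.e., a_m = a_{m-1} + 2Δ·(Σ_{j=1}^{m-2} j·a_{m-1-j}) + 2Δ(2m-1), where Δ is a fixed positive real. Then for all m ≥ 4, a_m = 3a_{m-1} + (2Δ−3)a_{m-2} + a_{m-3}. -/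
/-!
Write `Cₙ = Σ_{k<n} (k+1)·b(n-k)`. Its first difference `Cₙ₊₁ - Cₙ = b(n+1) + ⋯ + b(1)` is a
partial sum, so its second difference is the single term `b(n+2)`. Taking the second difference
of the recurrence at `m = n+4, n+3, n+2` kills the linear term `2Δ(2m-1)` and turns the
convolution into `2Δ·a(n+2)`, which is the three-term recurrence.
-/

open Finset

theorem sum_Icc_one_mul_eq_sum_range {R : Type*} [CommSemiring R] (b : ℕ → R) (n : ℕ) :
    ∑ j ∈ Icc 1 n, (j : R) * b (n + 1 - j) = ∑ k ∈ range n, ((k : R) + 1) * b (n - k) := by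
  rw [show Icc 1 n = Ico 1 (n + 1) by ext; simp, sum_Ico_eq_sum_range]
  refine sum_congr rfl fun k _ => ?_
  rw [show n + 1 - (1 + k) = n - k by omega]
  push_cast
  ring

theorem sum_range_succ_sub {M : Type*} [AddCommMonoid M] (b : ℕ → M) (n : ℕ) :
    ∑ k ∈ range (n + 1), b (n + 1 - k) = b (n + 1) + ∑ k ∈ range n, b (n - k) := by
  rw [sum_range_succ', add_comm]
  simp

theorem sum_range_succ_mul_sub {R : Type*} [CommSemiring R] (b : ℕ → R) (n : ℕ) :
    ∑ k ∈ range (n + 1), ((k : R) + 1) * b (n + 1 - k)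
      = ∑ k ∈ range n, ((k : R) + 1) * b (n - k) + ∑ k ∈ range (n + 1), b (n + 1 - k) := by
  have hterm : ∀ k ∈ range n, ((k + 1 : ℕ) + 1 : R) * b (n + 1 - (k + 1))
      = ((k : R) + 1) * b (n - k) + b (n - k) := fun k _ => by
    rw [Nat.add_sub_add_right]
    push_cast
    ring
  rw [sum_range_succ', sum_range_succ_sub, sum_congr rfl hterm, sum_add_distrib]
  simp only [Nat.cast_zero, zero_add, tsub_zero, one_mul]
  ring

theorem sum_range_mul_sub_second_diff {R : Type*} [CommRing R] (b : ℕ → R) (n : ℕ) :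
    ∑ k ∈ range (n + 2), ((k : R) + 1) * b (n + 2 - k)
      - 2 * ∑ k ∈ range (n + 1), ((k : R) + 1) * b (n + 1 - k)
      + ∑ k ∈ range n, ((k : R) + 1) * b (n - k) = b (n + 2) := by
  rw [sum_range_succ_mul_sub, sum_range_succ_mul_sub, sum_range_succ_sub b (n + 1)]
  ring

theorem recurrence_reduction_general (Δ : ℝ) (a : ℕ → ℝ)
    (hrec : ∀ m : ℕ, 2 ≤ m →
      a m = a (m - 1) + 2 * Δ * (∑ j ∈ Finset.Icc 1 (m - 2), (j : ℝ) * a (m - 1 - j))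
            + 2 * Δ * (2 * (m : ℝ) - 1)) :
    ∀ m : ℕ, 4 ≤ m →
      a m = 3 * a (m - 1) + (2 * Δ - 3) * a (m - 2) + a (m - 3) := by
  have hrec_shift : ∀ n : ℕ, a (n + 2) = a (n + 1)
      + 2 * Δ * ∑ k ∈ range n, ((k : ℝ) + 1) * a (n - k) + 2 * Δ * (2 * n + 3) := fun n => by
    rw [hrec (n + 2) (by omega), ← sum_Icc_one_mul_eq_sum_range]
    push_cast
    ring_nf
  intro m hm
  obtain ⟨n, rfl⟩ : ∃ n, m = n + 4 := ⟨m - 4, by omega⟩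
  have h4 := hrec_shift (n + 2)
  have h3 := hrec_shift (n + 1)
  have h2 := hrec_shift n
  show a (n + 4) = 3 * a (n + 3) + (2 * Δ - 3) * a (n + 2) + a (n + 1)
  push_cast at h4 h3 h2
  linear_combination h4 - 2 * h3 + h2 + 2 * Δ * sum_range_mul_sub_second_diff a n

/-- From the full-history recurrence
`aₘ = aₘ₋₁ + 2Δ·(Σ_{j=1}^{m-2} j·aₘ₋₁₋ⱼ) + 2Δ(2m−1)` (for all m ≥ 2)
one deduces the linear recurrence
`aₘ = 3aₘ₋₁ + (2Δ−3)aₘ₋₂ + aₘ₋₃` for all m ≥ 4. -/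
theorem recurrence_reduction (Δ : ℝ) (hΔ : 0 < Δ) (a : ℕ → ℝ)
    (hrec : ∀ m : ℕ, 2 ≤ m →
      a m = a (m - 1) + 2 * Δ * (∑ j ∈ Finset.Icc 1 (m - 2), (j : ℝ) * a (m - 1 - j))
            + 2 * Δ * (2 * (m : ℝ) - 1)) :
    ∀ m : ℕ, 4 ≤ m →
      a m = 3 * a (m - 1) + (2 * Δ - 3) * a (m - 2) + a (m - 3) :=
  recurrence_reduction_general Δ a hrec
end

section
/- Let Δ ≥ 4 be a real number and let φ = (1/3)·arccos(√(27/(8Δ))). Then the three real numbers λ'_k = 1 + 2·√(2Δ/3)·cos(φ + 2kπ/3), k = 0, 1, 2, are exactly the roots of the cubic λ³ − 3λ² − (2Δ−3)λ − 1 = 0, and |λ'_1| < λ'_0 and |λ'_2| < λ'_0. -/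
open Real

/-- For `Δ ≥ 4`, with `φ = arccos(√(27/(8Δ)))/3`, the numbers
`λ'ₖ = 1 + 2√(2Δ/3)·cos(φ + 2kπ/3)`, `k = 0,1,2`, are exactly the (pairwise
distinct) roots of `λ³ − 3λ² − (2Δ−3)λ − 1 = 0`, and `λ'₀` is strictly largest
in absolute value. -/
theorem cubic_three_real_roots (Δ : ℝ) (hΔ : 4 ≤ Δ) :
    let φ : ℝ := arccos (Real.sqrt (27 / (8 * Δ))) / 3
    let lam : ℕ → ℝ := fun k => 1 + 2 * Real.sqrt (2 * Δ / 3) * cos (φ + 2 * k * π / 3)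
    (∀ x : ℝ, x ^ 3 - 3 * x ^ 2 - (2 * Δ - 3) * x - 1 = 0 ↔
      (x = lam 0 ∨ x = lam 1 ∨ x = lam 2)) ∧
    lam 0 ≠ lam 1 ∧ lam 0 ≠ lam 2 ∧ lam 1 ≠ lam 2 ∧
    |lam 1| < lam 0 ∧ |lam 2| < lam 0 := by
  intro φ lam
  have hΔ0 : (0:ℝ) < Δ := by linarith
  set c : ℝ := Real.sqrt (27 / (8 * Δ)) with hc
  set r : ℝ := 2 * Real.sqrt (2 * Δ / 3) with hr
  have hcpos : 0 < c := Real.sqrt_pos.2 (by positivity)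
  have hc1 : c < 1 := by
    have h1 : 27 / (8 * Δ) < 1 := by
      rw [div_lt_one (by positivity)]; linarith
    calc c = Real.sqrt (27 / (8*Δ)) := hc
      _ < Real.sqrt 1 := Real.sqrt_lt_sqrt (by positivity) (by simpa using h1)
      _ = 1 := Real.sqrt_one
  have hr0 : 0 < r := by rw [hr]; positivity
  have hr2 : r ^ 2 = 8 * Δ / 3 := by
    rw [hr, mul_pow, Real.sq_sqrt (by positivity)]; ring
  have hrc : r * c = 3 := by
    rw [hr, hc, mul_assoc, ← Real.sqrt_mul (by positivity)]
    have h9 : 2 * Δ / 3 * (27 / (8 * Δ)) = (3/2)^2 := by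
      field_simp; ring
    rw [h9, Real.sqrt_sq (by norm_num)]; ring
  have hφ0 : 0 < φ := by
    have := Real.arccos_pos.2 hc1
    show 0 < arccos c / 3
    linarith
  have hφ6 : φ < π / 6 := by
    have := Real.arccos_lt_pi_div_two.2 hcpos
    show arccos c / 3 < π / 6
    linarith
  have hπ : (0:ℝ) < π := Real.pi_pos
  -- each lam k is a root
  have key : ∀ θ : ℝ, Real.cos (3 * θ) = c →
      (1 + r * Real.cos θ) ^ 3 - 3 * (1 + r * Real.cos θ) ^ 2
        - (2 * Δ - 3) * (1 + r * Real.cos θ) - 1 = 0 := by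
    intro θ h3
    have e : 4 * Real.cos θ ^ 3 - 3 * Real.cos θ = c := by
      rw [← Real.cos_three_mul]; exact h3
    linear_combination (r * Real.cos θ ^ 3) * hr2 + (2*Δ/3) * hrc + (2*Δ/3*r) * e
  have h3φ : (3:ℝ) * φ = arccos c := by
    show (3:ℝ) * (arccos c / 3) = arccos c; ring
  have hcos0 : Real.cos (3 * φ) = c := by
    rw [h3φ]; exact Real.cos_arccos (by linarith) (le_of_lt hc1)
  have hcos1 : Real.cos (3 * (φ + 2 * π / 3)) = c := by
    have h : (3:ℝ) * (φ + 2 * π / 3) = 3 * φ + 2 * π := by ring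
    rw [h, Real.cos_add_two_pi]; exact hcos0
  have hcos2 : Real.cos (3 * (φ + 4 * π / 3)) = c := by
    have h : (3:ℝ) * (φ + 4 * π / 3) = 3 * φ + 2 * π + 2 * π := by ring
    rw [h, Real.cos_add_two_pi, Real.cos_add_two_pi]; exact hcos0
  -- expressions for lam
  have hlam0 : lam 0 = 1 + r * Real.cos φ := by
    show 1 + r * Real.cos (φ + 2 * (0:ℕ) * π / 3) = _
    norm_num
  have hlam1 : lam 1 = 1 + r * Real.cos (φ + 2 * π / 3) := by
    show 1 + r * Real.cos (φ + 2 * (1:ℕ) * π / 3) = _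
    norm_num
  have hlam2 : lam 2 = 1 + r * Real.cos (φ + 4 * π / 3) := by
    show 1 + r * Real.cos (φ + 2 * (2:ℕ) * π / 3) = _
    norm_num
  set c0 : ℝ := Real.cos φ with hc0
  set c1 : ℝ := Real.cos (φ + 2 * π / 3) with hc1'
  set c2 : ℝ := Real.cos (φ + 4 * π / 3) with hc2'
  have hs3 : (1:ℝ) < Real.sqrt 3 := by
    nlinarith [Real.sq_sqrt (show (0:ℝ) ≤ 3 by norm_num), Real.sqrt_nonneg 3]
  -- cosine bounds
  have hb0 : Real.sqrt 3 / 2 < c0 := by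
    have := Real.cos_lt_cos_of_nonneg_of_le_pi (le_of_lt hφ0) (by linarith) hφ6
    rwa [Real.cos_pi_div_six] at this
  have hb1u : c1 < -(1/2) := by
    have := Real.cos_lt_cos_of_nonneg_of_le_pi (by positivity : (0:ℝ) ≤ 2*π/3)
      (by linarith) (by linarith : 2*π/3 < φ + 2*π/3)
    have h23 : Real.cos (2*π/3) = -(1/2) := by
      rw [show (2*π/3 : ℝ) = π - π/3 by ring, Real.cos_pi_sub, Real.cos_pi_div_three]
    rw [h23] at this; exact this
  have hb1l : -(Real.sqrt 3 / 2) < c1 := by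
    have := Real.cos_lt_cos_of_nonneg_of_le_pi (by linarith : (0:ℝ) ≤ φ + 2*π/3)
      (by linarith : 5*π/6 ≤ π) (by linarith : φ + 2*π/3 < 5*π/6)
    have h56 : Real.cos (5*π/6) = -(Real.sqrt 3/2) := by
      rw [show (5*π/6 : ℝ) = π - π/6 by ring, Real.cos_pi_sub, Real.cos_pi_div_six]
    rw [h56] at this; exact this
  have hc2eq : c2 = Real.cos (2*π/3 - φ) := by
    rw [hc2', show (φ + 4*π/3 : ℝ) = 2*π - (2*π/3 - φ) by ring, Real.cos_two_pi_sub]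
  have hb2u : c2 < 0 := by
    rw [hc2eq]
    have := Real.cos_lt_cos_of_nonneg_of_le_pi (by positivity : (0:ℝ) ≤ π/2)
      (by linarith : 2*π/3 - φ ≤ π) (by linarith : π/2 < 2*π/3 - φ)
    rwa [Real.cos_pi_div_two] at this
  have hb2l : -(1/2) < c2 := by
    rw [hc2eq]
    have := Real.cos_lt_cos_of_nonneg_of_le_pi (by linarith : (0:ℝ) ≤ 2*π/3 - φ)
      (by linarith : 2*π/3 ≤ π) (by linarith : 2*π/3 - φ < 2*π/3)
    have h23 : Real.cos (2*π/3) = -(1/2) := by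
      rw [show (2*π/3 : ℝ) = π - π/3 by ring, Real.cos_pi_sub, Real.cos_pi_div_three]
    rw [h23] at this; exact this
  -- root equations
  have ha : (lam 0)^3 - 3*(lam 0)^2 - (2*Δ-3)*(lam 0) - 1 = 0 := by
    rw [hlam0]; exact key φ hcos0
  have hbq : (lam 1)^3 - 3*(lam 1)^2 - (2*Δ-3)*(lam 1) - 1 = 0 := by
    rw [hlam1]; exact key _ hcos1
  have hcq : (lam 2)^3 - 3*(lam 2)^2 - (2*Δ-3)*(lam 2) - 1 = 0 := by
    rw [hlam2]; exact key _ hcos2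
  -- distinctness
  have h01 : c1 < c0 := by linarith
  have h02 : c2 < c0 := by linarith
  have h12 : c1 < c2 := by linarith
  rw [hlam0] at ha
  rw [hlam1] at hbq
  rw [hlam2] at hcq
  rw [hlam0, hlam1, hlam2]
  set A : ℝ := 1 + r * c0 with hA
  set B : ℝ := 1 + r * c1 with hB
  set D : ℝ := 1 + r * c2 with hD
  clear_value A B D c2 c1 c0 r c lam φ
  have hne01 : A ≠ B := by
    intro h
    rw [hA, hB] at h
    have := mul_lt_mul_of_pos_left h01 hr0
    linarith
  have hne02 : A ≠ D := by
    intro h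
    rw [hA, hD] at h
    have := mul_lt_mul_of_pos_left h02 hr0
    linarith
  have hne12 : B ≠ D := by
    intro h
    rw [hB, hD] at h
    have := mul_lt_mul_of_pos_left h12 hr0
    linarith
  have Qab : A^2 + A*B + B^2 - 3*(A+B) - (2*Δ-3) = 0 := by
    have h : (A-B) * (A^2 + A*B + B^2 - 3*(A+B) - (2*Δ-3)) = 0 := by
      linear_combination ha - hbq
    exact (mul_eq_zero.1 h).resolve_left (sub_ne_zero.2 hne01)
  have Qad : A^2 + A*D + D^2 - 3*(A+D) - (2*Δ-3) = 0 := by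
    have h : (A-D) * (A^2 + A*D + D^2 - 3*(A+D) - (2*Δ-3)) = 0 := by
      linear_combination ha - hcq
    exact (mul_eq_zero.1 h).resolve_left (sub_ne_zero.2 hne02)
  have hsum : A + B + D = 3 := by
    have h : (B-D) * (A + B + D - 3) = 0 := by linear_combination Qab - Qad
    have := (mul_eq_zero.1 h).resolve_left (sub_ne_zero.2 hne12)
    linarith
  have he2 : A*B + A*D + B*D = 3 - 2*Δ := by
    linear_combination (A+B)*hsum - Qab
  have he3 : A*B*D = 1 := by
    linear_combination ha + A*he2 - A^2*hsum
  refine ⟨?_, hne01, hne02, hne12, ?_, ?_⟩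
  · intro x
    have hfac : x ^ 3 - 3 * x ^ 2 - (2 * Δ - 3) * x - 1 = (x-A)*(x-B)*(x-D) := by
      linear_combination (x^2)*hsum - x*he2 + he3
    rw [hfac, mul_eq_zero, mul_eq_zero, sub_eq_zero, sub_eq_zero, sub_eq_zero, or_assoc]
  · rw [abs_lt, hA, hB]
    constructor
    · have h2 := mul_pos hr0 (show (0:ℝ) < c0 + c1 by linarith)
      rw [mul_add] at h2
      linarith
    · have h2 := mul_lt_mul_of_pos_left h01 hr0
      linarith
  · rw [abs_lt, hA, hD]
    constructor
    · have h2 := mul_pos hr0 (show (0:ℝ) < c0 + c2 by linarith)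
      rw [mul_add] at h2
      linarith
    · have h2 := mul_lt_mul_of_pos_left h02 hr0
      linarith
end

section
/- Let m ≥ 5 and consider any sequence S of m terms each equal to 1 or −1. Define f(S) = ∏_{i=1}^p (2Δ·h_i) where S = 1^{k_1}(−1)^{h_1}1^{k_2}(−1)^{h_2}...(−1)^{h_p}1^{k_{p+1}} is the maximal-block decomposition (with f(1^m) = 1), and a_m = Σ_{S ∈ {−1,1}^m} f(S). Then a_m = a_{m-1} + 2Δ·Σ_{j=1}^{m-2} j·a_{m-1-j} + 2Δ(m−1) + 2Δm, where Δ > 0 is a fixed real. -/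
/-- `f Δ S`: decompose the `±1`-sequence `S` (encoded over `Bool`, with
`false` standing for `−1` and `true` for `1`) into maximal constant blocks,
and take the product of `2Δ·h` over all blocks of `−1`'s of length `h`
(empty product `1`). -/
def blockWeight (Δ : ℝ) (S : List Bool) : ℝ :=
  ((S.splitBy (· == ·)).map
    (fun g => if g.head? = some false then 2 * Δ * g.length else 1)).prod

/-!
The weight is multiplicative across a junction of two different letters, so a leading `1`
does not change it, and a leading run of `n ≥ 1` copies of `−1` closed by a `1` contributes
the factor `2Δn`. Hence the sum `P n m` of the weights of the sequences `(−1)ⁿ S`, `|S| = m`,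
satisfies `P n (m + 1) = P (n + 1) m + 2Δn·aₘ`, and unrolling this classifies the sequences
by the length of their initial run of `−1`'s (the mirror image of the terminal run).
-/

open Finset List

lemma List.exists_eq_replicate_append {α : Type*} (b : α) (l : List α) :
    ∃ k l', l = replicate k b ++ l' ∧ l'.head? ≠ some b := by
  induction l with
  | nil => exact ⟨0, [], rfl, by simp⟩
  | cons c l ih =>
    by_cases hc : c = b
    · obtain ⟨k, l', rfl, hl'⟩ := ih
      exact ⟨k + 1, l', by simp [hc, replicate_succ], hl'⟩
    · exact ⟨0, c :: l, rfl, by simpa using hc⟩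

lemma Fintype.sum_ofFn_fin_succ {α M : Type*} [Fintype α] [AddCommMonoid M] (F : List α → M)
    (m : ℕ) :
    ∑ S : Fin (m + 1) → α, F (ofFn S) = ∑ a, ∑ S : Fin m → α, F (a :: ofFn S) := by
  rw [← (Fin.consEquiv fun _ => α).sum_comp, Fintype.sum_prod_type]
  simp only [Fin.consEquiv, Equiv.coe_fn_mk, ofFn_cons]

section BlockWeight

variable (Δ : ℝ)

lemma blockWeight_append {l m : List Bool} (h : ∀ x ∈ l.getLast?, ∀ y ∈ m.head?, x ≠ y) :
    blockWeight Δ (l ++ m) = blockWeight Δ l * blockWeight Δ m := by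
  rw [blockWeight, splitBy_append fun x hx y hy => beq_eq_false_iff_ne.2 (h x hx y hy),
    map_append, prod_append, blockWeight, blockWeight]

lemma blockWeight_replicate (b : Bool) {n : ℕ} (hn : n ≠ 0) :
    blockWeight Δ (replicate n b) = if b then 1 else 2 * Δ * n := by
  rw [blockWeight, splitBy_of_isChain (by simpa using hn)
    (isChain_replicate_of_rel n (beq_self_eq_true b))]
  cases b <;> simp [head?_replicate, hn]

lemma blockWeight_replicate_true_append (k : ℕ) {l : List Bool} (hl : l.head? ≠ some true) :
    blockWeight Δ (replicate k true ++ l) = blockWeight Δ l := by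
  rcases eq_or_ne k 0 with rfl | hk
  · rfl
  rw [blockWeight_append, blockWeight_replicate Δ true hk, if_pos rfl, one_mul]
  simp only [getLast?_replicate, hk, if_false, Option.mem_def, Option.some.injEq]
  rintro _ rfl y hy rfl
  exact hl hy

lemma blockWeight_true_cons (l : List Bool) : blockWeight Δ (true :: l) = blockWeight Δ l := by
  obtain ⟨k, l', rfl, hl'⟩ := exists_eq_replicate_append true l
  change blockWeight Δ (replicate (k + 1) true ++ l') = _
  rw [blockWeight_replicate_true_append Δ _ hl', blockWeight_replicate_true_append Δ _ hl']

lemma blockWeight_replicate_false_append_true_cons {n : ℕ} (hn : n ≠ 0) (l : List Bool) :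
    blockWeight Δ (replicate n false ++ true :: l) = 2 * Δ * n * blockWeight Δ l := by
  rw [blockWeight_append, blockWeight_replicate Δ false hn, if_neg Bool.false_ne_true,
    blockWeight_true_cons]
  simp [getLast?_replicate, hn]

end BlockWeight

noncomputable def blockWeightSum (Δ : ℝ) (m : ℕ) : ℝ :=
  ∑ S : Fin m → Bool, blockWeight Δ (ofFn S)

noncomputable def prefixedBlockWeightSum (Δ : ℝ) (n m : ℕ) : ℝ :=
  ∑ S : Fin m → Bool, blockWeight Δ (replicate n false ++ ofFn S)

section BlockWeightSum

variable (Δ : ℝ)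

lemma blockWeightSum_zero : blockWeightSum Δ 0 = 1 := by
  simp [blockWeightSum, blockWeight]

lemma blockWeightSum_succ (m : ℕ) :
    blockWeightSum Δ (m + 1) = blockWeightSum Δ m + prefixedBlockWeightSum Δ 1 m := by
  simp only [blockWeightSum, prefixedBlockWeightSum, Fintype.sum_ofFn_fin_succ, Fintype.sum_bool,
    blockWeight_true_cons, replicate_one, singleton_append]

lemma prefixedBlockWeightSum_zero {n : ℕ} (hn : n ≠ 0) :
    prefixedBlockWeightSum Δ n 0 = 2 * Δ * n := by
  simp [prefixedBlockWeightSum, blockWeight_replicate Δ false hn]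

lemma prefixedBlockWeightSum_succ {n : ℕ} (hn : n ≠ 0) (m : ℕ) :
    prefixedBlockWeightSum Δ n (m + 1)
      = prefixedBlockWeightSum Δ (n + 1) m + 2 * Δ * n * blockWeightSum Δ m := by
  have hfalse (l : List Bool) : replicate n false ++ false :: l = replicate (n + 1) false ++ l := by
    rw [replicate_succ', append_assoc, singleton_append]
  rw [prefixedBlockWeightSum,
    Fintype.sum_ofFn_fin_succ fun l => blockWeight Δ (replicate n false ++ l), Fintype.sum_bool]
  simp only [hfalse, blockWeight_replicate_false_append_true_cons Δ hn, ← mul_sum]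
  exact add_comm _ _

lemma prefixedBlockWeightSum_eq {n : ℕ} (hn : n ≠ 0) (m : ℕ) :
    prefixedBlockWeightSum Δ n m
      = 2 * Δ * ∑ i ∈ range m, (n + i : ℝ) * blockWeightSum Δ (m - 1 - i) + 2 * Δ * (n + m) := by
  induction m generalizing n with
  | zero => simp [prefixedBlockWeightSum_zero Δ hn]
  | succ m ih =>
    rw [prefixedBlockWeightSum_succ Δ hn, ih n.succ_ne_zero, Finset.sum_range_succ']
    simp only [Nat.add_sub_cancel, Nat.sub_zero, Nat.sub_sub, add_comm 1, Nat.cast_add_one,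
      Nat.cast_zero, add_assoc, add_comm (1 : ℝ)]
    ring

lemma blockWeightSum_succ_eq_sum_run_length (m : ℕ) :
    blockWeightSum Δ (m + 1) = blockWeightSum Δ m
      + 2 * Δ * ∑ j ∈ Icc 1 m, (j : ℝ) * blockWeightSum Δ (m - j) + 2 * Δ * (m + 1) := by
  rw [blockWeightSum_succ, prefixedBlockWeightSum_eq Δ one_ne_zero, ← Ico_add_one_right_eq_Icc,
    sum_Ico_eq_sum_range, Nat.add_sub_cancel]
  simp only [Nat.cast_one, Nat.cast_add, Nat.sub_sub, add_comm 1, add_comm (1 : ℝ)]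
  ring

end BlockWeightSum

theorem blockWeight_sum_recurrence_general (Δ : ℝ) (m : ℕ) (hm : 5 ≤ m)
    (a : ℕ → ℝ)
    (ha : ∀ k : ℕ, a k = ∑ S : Fin k → Bool, blockWeight Δ (List.ofFn S)) :
    a m = a (m - 1) + 2 * Δ * (∑ j ∈ Finset.Icc 1 (m - 2), (j : ℝ) * a (m - 1 - j))
          + 2 * Δ * ((m : ℝ) - 1) + 2 * Δ * (m : ℝ) := by
  obtain rfl : a = blockWeightSum Δ := funext ha
  obtain ⟨M, rfl⟩ : ∃ M, m = M + 2 := ⟨m - 2, by omega⟩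
  rw [blockWeightSum_succ_eq_sum_run_length, sum_Icc_succ_top (by omega), Nat.sub_self,
    blockWeightSum_zero, show M + 2 - 1 = M + 1 from rfl, show M + 2 - 2 = M from rfl]
  push_cast
  ring

/-- With `aₘ = Σ_{S ∈ {−1,1}^m} f(S)`, one has for `m ≥ 5`
`aₘ = aₘ₋₁ + 2Δ·Σ_{j=1}^{m−2} j·aₘ₋₁₋ⱼ + 2Δ(m−1) + 2Δm`. -/
theorem blockWeight_sum_recurrence (Δ : ℝ) (hΔ : 0 < Δ) (m : ℕ) (hm : 5 ≤ m)
    (a : ℕ → ℝ)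
    (ha : ∀ k : ℕ, a k = ∑ S : Fin k → Bool, blockWeight Δ (List.ofFn S)) :
    a m = a (m - 1) + 2 * Δ * (∑ j ∈ Finset.Icc 1 (m - 2), (j : ℝ) * a (m - 1 - j))
          + 2 * Δ * ((m : ℝ) - 1) + 2 * Δ * (m : ℝ) :=
  blockWeight_sum_recurrence_general Δ m hm a ha
end

section
/- Suppose every path is non-repetitively 4-choosable and every cycle is facially non-repetitively 5-choosable. Then the ladder graph L_n = P_n □ P_2 (drawn in the plane in the standard way) is facially non-repetitively 8-choosable: for every assignment of lists of size 8 to the vertices there is a colouring from the lists in which the colour sequence of every facial path is non-repetitive; moreover in such a colouring every 4-gonal face with colour pattern of the form ABCD or ABAC around it is non-repetitive. -/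
/-- A colouring `c` is facially non-repetitive on a face whose boundary walk
is the cyclic list `w` if the colour sequence of every path of consecutive
vertices along `w` (read cyclically) is non-repetitive. -/
def FaciallyNonrep {V β : Type*} (c : V → β) (w : List V) : Prop :=
  ∀ (i k : ℕ), k ≤ w.length → IsNonrepetitive (((w.rotate i).take k).map c)

/-- The boundary walk of the outer (2n-gonal) face of the ladder `Pₙ □ P₂`:
`v₁ v₂ ⋯ vₙ uₙ uₙ₋₁ ⋯ u₁`. -/
def outerBoundary (n : ℕ) : List (Fin n × Bool) :=
  ((List.finRange n).map (fun i => (i, false))) ++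
    ((List.finRange n).reverse.map (fun i => (i, true)))

/-- The boundary walk of the `i`-th quadrilateral face of the ladder. -/
def quadFace (n : ℕ) (i : ℕ) (h : i + 1 < n) : List (Fin n × Bool) :=
  [(⟨i, Nat.lt_of_succ_lt h⟩, false), (⟨i + 1, h⟩, false),
   (⟨i + 1, h⟩, true), (⟨i, Nat.lt_of_succ_lt h⟩, true)]

namespace LadderAux

lemma getElem?_mid {γ : Type*} (s m t : List γ) (j : ℕ) (hj : j < m.length) :
    (s ++ m ++ t)[s.length + j]? = m[j]? := by
  rw [List.append_assoc, List.getElem?_append_right (Nat.le_add_right _ _),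
    Nat.add_sub_cancel_left, List.getElem?_append]
  rw [if_pos hj]

/-- From an occurrence of a square `X ++ X` inside `l`, extract index form. -/
lemma rep_of_infix {γ : Type*} {X l : List γ} (hne : X ≠ []) (hinf : X ++ X <:+: l) :
    ∃ o ℓ, 1 ≤ ℓ ∧ o + 2 * ℓ ≤ l.length ∧
      ∀ d < ℓ, l[o + d]? = l[o + ℓ + d]? := by
  obtain ⟨s, t, rfl⟩ := hinf
  refine ⟨s.length, X.length, List.length_pos_iff.mpr hne, by simp; omega, ?_⟩
  intro d hd
  have h1 : (s ++ (X ++ X) ++ t)[s.length + d]? = (X ++ X)[d]? :=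
    getElem?_mid _ _ _ _ (by simp; omega)
  have h2 : (s ++ (X ++ X) ++ t)[s.length + (X.length + d)]? =
      (X ++ X)[X.length + d]? :=
    getElem?_mid _ _ _ _ (by simp; omega)
  rw [← Nat.add_assoc] at h2
  rw [h1, h2, List.getElem?_append, if_pos hd,
    List.getElem?_append_right (Nat.le_add_right _ _), Nat.add_sub_cancel_left]

/-- From an index-form repetition, conclude the list is repetitive. -/
lemma not_nonrep_of_index {γ : Type*} (l : List γ) (o ℓ : ℕ) (h1 : 1 ≤ ℓ)
    (h2 : o + 2 * ℓ ≤ l.length)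
    (h3 : ∀ d < ℓ, l[o + d]? = l[o + ℓ + d]?) :
    ¬ IsNonrepetitive l := by
  intro hnr
  have hXlen : ((l.drop o).take ℓ).length = ℓ := by
    simp [List.length_take, List.length_drop]; omega
  have hXX : (l.drop o).take ℓ ++ (l.drop o).take ℓ = (l.drop o).take (2 * ℓ) := by
    apply List.ext_getElem?
    intro i
    rcases lt_or_ge i ℓ with hi | hi
    · rw [List.getElem?_append, if_pos (by omega), List.getElem?_take, if_pos hi,
        List.getElem?_take, if_pos (by omega)]
    · rcases lt_or_ge i (2 * ℓ) with hi2 | hi2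
      · rw [List.getElem?_append_right (by omega), hXlen, List.getElem?_take,
          if_pos (by omega), List.getElem?_drop, List.getElem?_take, if_pos hi2,
          List.getElem?_drop]
        have h := h3 (i - ℓ) (by omega)
        have e : o + ℓ + (i - ℓ) = o + i := by omega
        rw [e] at h
        rw [show o + (i - ℓ) = o + (i - ℓ) from rfl]
        exact h
      · rw [List.getElem?_eq_none (by simp [hXlen]; omega),
          List.getElem?_eq_none (by simp [List.length_take, List.length_drop]; omega)]
  apply hnr ((l.drop o).take ℓ)
  · intro hc
    rw [hc] at hXlen
    simp at hXlen
    omega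
  · rw [hXX]
    exact ((List.take_prefix _ _).isInfix).trans ((List.drop_suffix _ _).isInfix)

lemma INR_of_infix {γ : Type*} {l l' : List γ} (h : IsNonrepetitive l) (hinf : l' <:+: l) :
    IsNonrepetitive l' :=
  fun X hne hx => h X hne (hx.trans hinf)

lemma getElem?_range_map {γ : Type*} {g : ℕ → γ} {k j : ℕ} (h : j < k) :
    ((List.range k).map g)[j]? = some (g j) := by
  rw [List.getElem?_map, List.getElem?_range h, Option.map_some]

/-- Build nonrepetitiveness of a range-map list from an index-form property. -/
lemma nonrep_rangemap {g : ℕ → ℕ} {k : ℕ}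
    (H : ∀ o ℓ, 1 ≤ ℓ → o + 2 * ℓ ≤ k → ∃ d < ℓ, g (o + d) ≠ g (o + ℓ + d)) :
    IsNonrepetitive ((List.range k).map g) := by
  intro X hne hinf
  obtain ⟨o, ℓ, h1, h2, h3⟩ := rep_of_infix hne hinf
  rw [List.length_map, List.length_range] at h2
  obtain ⟨d, hd, hne'⟩ := H o ℓ h1 h2
  apply hne'
  have h := h3 d hd
  rw [getElem?_range_map (by omega), getElem?_range_map (by omega)] at h
  exact Option.some.inj h

/-- Consume nonrepetitiveness of a range-map list into an index-form property. -/
lemma rangemap_nonrep {g : ℕ → ℕ} {k : ℕ}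
    (H : IsNonrepetitive ((List.range k).map g)) :
    ∀ o ℓ, 1 ≤ ℓ → o + 2 * ℓ ≤ k → ∃ d < ℓ, g (o + d) ≠ g (o + ℓ + d) := by
  intro o ℓ h1 h2
  by_contra hcon
  push_neg at hcon
  refine not_nonrep_of_index _ o ℓ h1 (by simp [h2]) ?_ H
  intro d hd
  rw [getElem?_range_map (by omega), getElem?_range_map (by omega), hcon d hd]

/-- A 4-list with distinct consecutive entries (cyclically), and not of the
form `ABAB`, is nonrepetitive. -/
lemma nr4 {p q r s : ℕ} (h1 : p ≠ q) (h2 : q ≠ r) (h3 : r ≠ s) (h4 : s ≠ p)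
    (h5 : p ≠ r ∨ q ≠ s) : IsNonrepetitive [p, q, r, s] := by
  intro X hne hinf
  obtain ⟨o, ℓ, hℓ, hlen, heq⟩ := rep_of_infix hne hinf
  simp only [List.length_cons, List.length_nil] at hlen
  have hℓ2 : ℓ ≤ 2 := by omega
  interval_cases ℓ
  · have ho : o ≤ 2 := by omega
    interval_cases o
    · have := heq 0 (by norm_num); simp at this; exact h1 this
    · have := heq 0 (by norm_num); simp at this; exact h2 this
    · have := heq 0 (by norm_num); simp at this; exact h3 this
  · have ho : o = 0 := by omega
    subst ho
    have e0 := heq 0 (by norm_num)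
    have e1 := heq 1 (by norm_num)
    simp at e0 e1
    rcases h5 with h | h
    · exact h e0
    · exact h e1

end LadderAux

open LadderAux in
/-- Assuming paths are non-repetitively 4-choosable and cycles are facially
non-repetitively 5-choosable, the ladder graph `Lₙ = Pₙ □ P₂` is facially
non-repetitively 8-choosable: from lists of size 8 there is a colouring in
which every facial path (along the outer face and along each 4-gonal face)
has a non-repetitive colour sequence. -/
theorem ladder_facially_nonrepetitive_8_choosable
    (hpath : ∀ (m : ℕ) (L : Fin m → Finset ℕ), (∀ i, 4 ≤ (L i).card) →
      ∃ c : Fin m → ℕ, (∀ i, c i ∈ L i) ∧ IsNonrepetitive (List.ofFn c))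
    (hcycle : ∀ (m : ℕ), 3 ≤ m → ∀ L : ZMod m → Finset ℕ, (∀ i, 5 ≤ (L i).card) →
      ∃ c : ZMod m → ℕ, (∀ i, c i ∈ L i) ∧
        ∀ (i : ZMod m) (k : ℕ), k ≤ m →
          IsNonrepetitive ((List.range k).map (fun j => c (i + (j : ZMod m)))))
    (n : ℕ) (hn : 2 ≤ n)
    (L : Fin n × Bool → Finset ℕ) (hL : ∀ v, 8 ≤ (L v).card) :
    ∃ c : Fin n × Bool → ℕ, (∀ v, c v ∈ L v) ∧
      FaciallyNonrep c (outerBoundary n) ∧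
      ∀ (i : ℕ) (h : i + 1 < n), FaciallyNonrep c (quadFace n i h) := by
  clear hcycle
  -- the two corner colours
  obtain ⟨β, hβ⟩ := Finset.card_pos.mp
    (lt_of_lt_of_le (by norm_num) (hL (⟨n - 1, by omega⟩, true)))
  obtain ⟨α, hα, hαβ⟩ := Finset.exists_mem_ne
    (lt_of_lt_of_le (by norm_num) (hL (⟨0, by omega⟩, true))) β
  -- interior top row
  obtain ⟨τ, hτmem, hτnr⟩ := hpath (n - 2)
    (fun i => L (⟨i.1 + 1, by omega⟩, true) \ {α, β})
    (fun i => by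
      show 4 ≤ (L (⟨i.1 + 1, by omega⟩, true) \ ({α, β} : Finset ℕ)).card
      have h8 := hL (⟨i.1 + 1, by omega⟩, true)
      have hsub := Finset.card_le_card_sdiff_add_card
        (s := L (⟨i.1 + 1, by omega⟩, true)) (t := ({α, β} : Finset ℕ))
      have h1 := Finset.card_insert_le α ({β} : Finset ℕ)
      have h2 : ({β} : Finset ℕ).card = 1 := Finset.card_singleton β
      omega)
  -- the top colouring as a function on ℕ
  set T : ℕ → ℕ := fun j =>
    if j = 0 then α else if j = n - 1 then β else
      if h : j - 1 < n - 2 then τ ⟨j - 1, h⟩ else 0 with hT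
  have hT0 : T 0 = α := by simp [hT]
  have hTn1 : T (n - 1) = β := by
    simp only [hT]
    rw [if_neg (by omega : ¬(n - 1 = 0))]
    simp
  have hTint : ∀ x (hx : x < n - 2), T (1 + x) = τ ⟨x, hx⟩ := by
    intro x hx
    simp only [hT]
    rw [if_neg (by omega), if_neg (by omega)]
    simp only [show 1 + x - 1 = x from by omega]
    rw [dif_pos hx]
  have hTne : ∀ j, 0 < j → j < n - 1 → T j ≠ α ∧ T j ≠ β := by
    intro j h1 h2
    have hx : j - 1 < n - 2 := by omega
    have hm := hτmem ⟨j - 1, hx⟩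
    rw [Finset.mem_sdiff] at hm
    have hTj : T j = τ ⟨j - 1, hx⟩ := by
      have h := hTint (j - 1) hx
      rw [show 1 + (j - 1) = j from by omega] at h
      exact h
    rw [hTj]
    constructor <;> intro hc <;> exact hm.2 (by simp [hc])
  have hTuα : ∀ j, j < n → j ≠ 0 → T j ≠ α := by
    intro j hj h0
    rcases eq_or_ne j (n - 1) with rfl | hn1'
    · rw [hTn1]; exact fun hc => hαβ hc.symm
    · exact (hTne j (by omega) (by omega)).1
  have hTuβ : ∀ j, j < n → j ≠ n - 1 → T j ≠ β := by
    intro j hj h1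
    rcases eq_or_ne j 0 with rfl | h0
    · rw [hT0]; exact hαβ
    · exact (hTne j (by omega) (by omega)).2
  have hTmem : ∀ j : Fin n, T j.1 ∈ L (j, true) := by
    intro j
    rcases eq_or_ne j.1 0 with h0 | h0
    · have hj : j = ⟨0, by omega⟩ := Fin.ext h0
      rw [h0, hT0, hj]; exact hα
    · rcases eq_or_ne j.1 (n - 1) with h1 | h1
      · have hj : j = ⟨n - 1, by omega⟩ := Fin.ext h1
        rw [h1, hTn1, hj]; exact hβ
      · have hx : j.1 - 1 < n - 2 := by omega
        have hm := hτmem ⟨j.1 - 1, hx⟩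
        rw [Finset.mem_sdiff] at hm
        have hTj : T j.1 = τ ⟨j.1 - 1, hx⟩ := by
          have h := hTint (j.1 - 1) hx
          rw [show 1 + (j.1 - 1) = j.1 from by omega] at h
          exact h
        rw [hTj]
        have he : (⟨j.1 - 1 + 1, by omega⟩ : Fin n) = j := by
          apply Fin.ext
          show j.1 - 1 + 1 = j.1
          omega
        have hLrw : L (j, true) = L ((⟨j.1 - 1 + 1, by omega⟩ : Fin n), true) := by rw [he]
        rw [hLrw]
        exact hm.1
  -- interior top nonrepetitiveness, index form
  have hofτ : List.ofFn τ = (List.range (n - 2)).map (fun x => T (1 + x)) := by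
    apply List.ext_getElem (by simp)
    intro i hi1 hi2
    rw [List.getElem_ofFn, List.getElem_map, List.getElem_range]
    have hx : i < n - 2 := by simpa using hi1
    rw [hTint i hx]
  have hTnrI : ∀ o ℓ, 1 ≤ ℓ → o + 2 * ℓ ≤ n - 2 →
      ∃ d < ℓ, T (1 + o + d) ≠ T (1 + o + ℓ + d) := by
    intro o ℓ h1 h2
    have := rangemap_nonrep (g := fun x => T (1 + x)) (k := n - 2) (hofτ ▸ hτnr) o ℓ h1 h2
    obtain ⟨d, hd, hne⟩ := this
    refine ⟨d, hd, ?_⟩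
    rw [show 1 + o + d = 1 + (o + d) from by omega,
      show 1 + o + ℓ + d = 1 + (o + ℓ + d) from by omega]
    exact hne
  -- bottom row
  obtain ⟨b', hb'mem, hb'nr⟩ := hpath n
    (fun k => L (k, false) \ {α, β, T k.1, T (k.1 + 1)})
    (fun k => by
      show 4 ≤ (L (k, false) \ ({α, β, T k.1, T (k.1 + 1)} : Finset ℕ)).card
      have h8 := hL (k, false)
      have hsub := Finset.card_le_card_sdiff_add_card
        (s := L (k, false)) (t := ({α, β, T k.1, T (k.1 + 1)} : Finset ℕ))
      have h1 := Finset.card_insert_le α ({β, T k.1, T (k.1 + 1)} : Finset ℕ)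
      have h2 := Finset.card_insert_le β ({T k.1, T (k.1 + 1)} : Finset ℕ)
      have h3 := Finset.card_insert_le (T k.1) ({T (k.1 + 1)} : Finset ℕ)
      have h4 : ({T (k.1 + 1)} : Finset ℕ).card = 1 := Finset.card_singleton _
      omega)
  set B : ℕ → ℕ := fun k => if h : k < n then b' ⟨k, h⟩ else 0 with hB
  have hBk : ∀ k : Fin n, B k.1 = b' k := by
    intro k
    simp only [hB]
    rw [dif_pos k.2]
  have hBavoid : ∀ k : Fin n,
      B k.1 ≠ α ∧ B k.1 ≠ β ∧ B k.1 ≠ T k.1 ∧ B k.1 ≠ T (k.1 + 1) := by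
    intro k
    have hm := hb'mem k
    rw [Finset.mem_sdiff] at hm
    have := hm.2
    rw [hBk]
    simp only [Finset.mem_insert, Finset.mem_singleton, not_or] at this
    exact ⟨this.1, this.2.1, this.2.2.1, this.2.2.2⟩
  have hBmem : ∀ k : Fin n, B k.1 ∈ L (k, false) := by
    intro k
    have hm := hb'mem k
    rw [Finset.mem_sdiff] at hm
    rw [hBk]
    exact hm.1
  have hBα : ∀ k, k < n → B k ≠ α := fun k hk => (hBavoid ⟨k, hk⟩).1
  have hBβ : ∀ k, k < n → B k ≠ β := fun k hk => (hBavoid ⟨k, hk⟩).2.1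
  have hBT : ∀ k, k < n → B k ≠ T k := fun k hk => (hBavoid ⟨k, hk⟩).2.2.1
  have hBT1 : ∀ k, k < n → B k ≠ T (k + 1) := fun k hk => (hBavoid ⟨k, hk⟩).2.2.2
  -- bottom nonrepetitiveness, index form
  have hofB : List.ofFn b' = (List.range n).map B := by
    apply List.ext_getElem (by simp)
    intro i hi1 hi2
    rw [List.getElem_ofFn, List.getElem_map, List.getElem_range]
    have hx : i < n := by simpa using hi1
    simp only [hB]
    rw [dif_pos hx]
  have hBnr : ∀ o ℓ, 1 ≤ ℓ → o + 2 * ℓ ≤ n →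
      ∃ d < ℓ, B (o + d) ≠ B (o + ℓ + d) :=
    rangemap_nonrep (hofB ▸ hb'nr)
  -- adjacent distinctness in the top row
  have hTadj : ∀ j, j + 1 < n → T j ≠ T (j + 1) := by
    intro j hj
    rcases eq_or_ne j 0 with rfl | h0
    · rw [hT0]; exact fun hc => (hTuα 1 (by omega) (by omega)) hc.symm
    · rcases eq_or_ne (j + 1) (n - 1) with he | h1
      · rw [he, hTn1]; exact hTuβ j (by omega) (by omega)
      · obtain ⟨d, hd, hne⟩ := hTnrI (j - 1) 1 le_rfl (by omega)
        have hd0 : d = 0 := by omega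
        subst hd0
        rwa [show 1 + (j - 1) + 0 = j from by omega,
          show 1 + (j - 1) + 1 + 0 = j + 1 from by omega] at hne
  -- the colouring
  refine ⟨fun x => if x.2 then T x.1.1 else B x.1.1, ?_, ?_, ?_⟩
  · rintro ⟨j, bb⟩
    cases bb
    · simpa using hBmem j
    · simpa using hTmem j
  · -- outer face
    set c : Fin n × Bool → ℕ := fun x => if x.2 then T x.1.1 else B x.1.1 with hc
    set f : ℕ → ℕ := fun q => if q < n then B q else T (2 * n - 1 - q) with hf
    have hwlen : (outerBoundary n).length = 2 * n := by
      simp [outerBoundary]; omega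
    have hcF : ∀ x : Fin n, c (x, false) = B x.1 := fun x => rfl
    have hcT : ∀ x : Fin n, c (x, true) = T x.1 := fun x => rfl
    have hwpos : ∀ (q : ℕ) (hq : q < (outerBoundary n).length),
        c ((outerBoundary n)[q]'hq) = f q := by
      intro q hq
      have hq2 : q < 2 * n := by rw [hwlen] at hq; exact hq
      have hlen1 : ((List.finRange n).map (fun i => ((i : Fin n), false))).length = n := by
        simp
      rcases lt_or_ge q n with hql | hqr
      · simp only [outerBoundary]
        rw [List.getElem_append_left (by rw [hlen1]; exact hql), List.getElem_map, hcF]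
        rw [List.getElem_finRange]
        simp only [Fin.coe_cast, Fin.val_mk, hf]
        rw [if_pos hql]
      · simp only [outerBoundary]
        rw [List.getElem_append_right (by rw [hlen1]; exact hqr), List.getElem_map, hcT]
        rw [List.getElem_reverse, List.getElem_finRange]
        simp only [Fin.coe_cast, Fin.val_mk, List.length_finRange, List.length_map, hf]
        rw [if_neg (by omega)]
        congr 1
        omega
    -- the colour sequence of the rotated walk
    have hclaim : ∀ i k, k ≤ 2 * n →
        (((outerBoundary n).rotate i).take k).map c
          = (List.range k).map (fun d => f ((i + d) % (2 * n))) := by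
      intro i k hk
      apply List.ext_getElem
      · simp [hwlen]; omega
      · intro j hj1 hj2
        have hjk : j < k := by
          simpa using hj2
        rw [List.getElem_map, List.getElem_take, List.getElem_rotate]
        rw [List.getElem_map, List.getElem_range]
        rw [hwpos _ _]
        congr 1
        rw [hwlen, Nat.add_comm]
    -- the key combinatorial lemma: no cyclic repetition
    have houter : ∀ a ℓ, 1 ≤ ℓ → 2 * ℓ ≤ 2 * n →
        ∃ d < ℓ, f ((a + d) % (2 * n)) ≠ f ((a + ℓ + d) % (2 * n)) := by
      intro a ℓ h1 h2
      by_contra hcon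
      push_neg at hcon
      set a' := a % (2 * n) with ha'
      have ha'lt : a' < 2 * n := Nat.mod_lt _ (by omega)
      have hrep : ∀ d < ℓ, f ((a' + d) % (2 * n)) = f ((a' + ℓ + d) % (2 * n)) := by
        intro d hd
        have e1 : (a' + d) % (2 * n) = (a + d) % (2 * n) := by
          rw [ha', Nat.mod_add_mod]
        have e2 : (a' + ℓ + d) % (2 * n) = (a + ℓ + d) % (2 * n) := by
          rw [show a' + ℓ + d = a' + (ℓ + d) from by omega, ha', Nat.mod_add_mod,
            show a + (ℓ + d) = a + ℓ + d from by omega]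
        rw [e1, e2]
        exact hcon d hd
      have hfn : f n = β := by
        simp only [hf]
        rw [if_neg (by omega), show 2 * n - 1 - n = n - 1 from by omega, hTn1]
      have hfm1 : f (2 * n - 1) = α := by
        simp only [hf]
        rw [if_neg (by omega), show 2 * n - 1 - (2 * n - 1) = 0 from by omega, hT0]
      by_cases hseam1 : ∃ d < 2 * ℓ, (a' + d) % (2 * n) = n
      · obtain ⟨d, hd, hdq⟩ := hseam1
        rcases lt_or_ge d ℓ with hdl | hdl
        · have heq := hrep d hdl
          rw [hdq, hfn] at heq
          have hq' : (a' + ℓ + d) % (2 * n) = (n + ℓ) % (2 * n) := by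
            rw [show a' + ℓ + d = a' + d + ℓ from by omega, ← Nat.mod_add_mod, hdq]
          rcases lt_or_ge (n + ℓ) (2 * n) with hc1 | hc1
          · rw [hq', Nat.mod_eq_of_lt hc1] at heq
            simp only [hf] at heq
            rw [if_neg (by omega)] at heq
            exact hTuβ (2 * n - 1 - (n + ℓ)) (by omega) (by omega) heq.symm
          · have hl : ℓ = n := by omega
            rw [hq', hl, show n + n = 2 * n from by omega, Nat.mod_self] at heq
            simp only [hf] at heq
            rw [if_pos (by omega)] at heq
            exact hBβ 0 (by omega) heq.symm
        · have heq := hrep (d - ℓ) (by omega)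
          rw [show a' + ℓ + (d - ℓ) = a' + d from by omega, hdq, hfn] at heq
          have hdm := Nat.div_add_mod (a' + d) (2 * n)
          rw [hdq] at hdm
          have hsub : a' + (d - ℓ) = 2 * n * ((a' + d) / (2 * n)) + (n - ℓ) := by omega
          have hq'' : (a' + (d - ℓ)) % (2 * n) = n - ℓ := by
            rw [hsub, Nat.mul_add_mod, Nat.mod_eq_of_lt (by omega)]
          rw [hq''] at heq
          simp only [hf] at heq
          rw [if_pos (by omega)] at heq
          exact hBβ (n - ℓ) (by omega) heq
      · by_cases hseam2 : ∃ d < 2 * ℓ, (a' + d) % (2 * n) = 2 * n - 1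
        · obtain ⟨d, hd, hdq⟩ := hseam2
          rcases lt_or_ge d ℓ with hdl | hdl
          · have heq := hrep d hdl
            rw [hdq, hfm1] at heq
            have hq' : (a' + ℓ + d) % (2 * n) = ℓ - 1 := by
              rw [show a' + ℓ + d = a' + d + ℓ from by omega, ← Nat.mod_add_mod, hdq]
              have : 2 * n - 1 + ℓ = 2 * n * 1 + (ℓ - 1) := by omega
              rw [this, Nat.mul_add_mod, Nat.mod_eq_of_lt (by omega)]
            rw [hq'] at heq
            simp only [hf] at heq
            rw [if_pos (by omega)] at heq
            exact hBα (ℓ - 1) (by omega) heq.symm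
          · have heq := hrep (d - ℓ) (by omega)
            rw [show a' + ℓ + (d - ℓ) = a' + d from by omega, hdq, hfm1] at heq
            have hdm := Nat.div_add_mod (a' + d) (2 * n)
            rw [hdq] at hdm
            have hsub : a' + (d - ℓ) = 2 * n * ((a' + d) / (2 * n)) + (2 * n - 1 - ℓ) := by
              omega
            have hq'' : (a' + (d - ℓ)) % (2 * n) = 2 * n - 1 - ℓ := by
              rw [hsub, Nat.mul_add_mod, Nat.mod_eq_of_lt (by omega)]
            rw [hq''] at heq
            rcases lt_or_ge (2 * n - 1 - ℓ) n with hc1 | hc1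
            · simp only [hf] at heq
              rw [if_pos hc1] at heq
              exact hBα (2 * n - 1 - ℓ) (by omega) heq
            · simp only [hf] at heq
              rw [if_neg (by omega)] at heq
              have : 2 * n - 1 - (2 * n - 1 - ℓ) = ℓ := by omega
              rw [this] at heq
              exact hTuα ℓ (by omega) (by omega) heq
        · push_neg at hseam1 hseam2
          have ha'1 : a' ≠ n := by
            intro hc
            exact hseam1 0 (by omega) (by rw [Nat.add_zero, Nat.mod_eq_of_lt ha'lt, hc])
          have ha'2 : a' ≠ 2 * n - 1 := by
            intro hc
            exact hseam2 0 (by omega) (by rw [Nat.add_zero, Nat.mod_eq_of_lt ha'lt, hc])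
          rcases lt_or_ge a' n with hbot | htop
          · have hub : a' + 2 * ℓ ≤ n := by
              by_contra hcon2
              exact hseam1 (n - a') (by omega)
                (by rw [Nat.mod_eq_of_lt (by omega)]; omega)
            obtain ⟨d, hd, hne⟩ := hBnr a' ℓ h1 (by omega)
            apply hne
            have h := hrep d hd
            rw [Nat.mod_eq_of_lt (by omega), Nat.mod_eq_of_lt (by omega)] at h
            simp only [hf] at h
            rw [if_pos (by omega), if_pos (by omega)] at h
            exact h
          · have ha'n : n < a' := by omega
            have hub : a' + 2 * ℓ ≤ 2 * n - 1 := by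
              by_contra hcon2
              exact hseam2 (2 * n - 1 - a') (by omega)
                (by rw [Nat.mod_eq_of_lt (by omega)]; omega)
            obtain ⟨d, hd, hne⟩ := hTnrI (2 * n - a' - 2 * ℓ - 1) ℓ h1 (by omega)
            apply hne
            have h := hrep (ℓ - 1 - d) (by omega)
            rw [Nat.mod_eq_of_lt (by omega), Nat.mod_eq_of_lt (by omega)] at h
            simp only [hf] at h
            rw [if_neg (by omega), if_neg (by omega)] at h
            rw [show 2 * n - 1 - (a' + (ℓ - 1 - d))
                  = 1 + (2 * n - a' - 2 * ℓ - 1) + ℓ + d from by omega,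
              show 2 * n - 1 - (a' + ℓ + (ℓ - 1 - d))
                  = 1 + (2 * n - a' - 2 * ℓ - 1) + d from by omega] at h
            exact h.symm
    -- assemble the outer-face claim
    intro i k hk
    rw [hwlen] at hk
    rw [hclaim i k hk]
    apply nonrep_rangemap
    intro o ℓ h1 h2
    obtain ⟨d, hd, hne⟩ := houter (i + o) ℓ h1 (by omega)
    refine ⟨d, hd, ?_⟩
    rw [show i + (o + d) = i + o + d from by omega,
      show i + (o + ℓ + d) = i + o + ℓ + d from by omega]
    exact hne
  · -- quadrilateral faces
    set c : Fin n × Bool → ℕ := fun x => if x.2 then T x.1.1 else B x.1.1 with hc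
    intro i h i' k hk
    have hql : (quadFace n i h).length = 4 := rfl
    have hBadj : B i ≠ B (i + 1) := by
      obtain ⟨d, hd, hne⟩ := hBnr i 1 le_rfl (by omega)
      have hd0 : d = 0 := by omega
      subst hd0
      simpa using hne
    have hTadj' : T i ≠ T (i + 1) := hTadj i h
    have hbt0 : B i ≠ T i := hBT i (by omega)
    have hbt1 : B (i + 1) ≠ T (i + 1) := hBT (i + 1) (by omega)
    have hdiag : B i ≠ T (i + 1) := hBT1 i (by omega)
    have key : IsNonrepetitive (((quadFace n i h).rotate i').map c) := by
      have hrw : (quadFace n i h).rotate i' = (quadFace n i h).rotate (i' % 4) := by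
        conv_rhs => rw [show i' % 4 = i' % (quadFace n i h).length from by rw [hql],
          List.rotate_mod]
      rw [hrw]
      have hm : i' % 4 = 0 ∨ i' % 4 = 1 ∨ i' % 4 = 2 ∨ i' % 4 = 3 := by omega
      rcases hm with hr | hr | hr | hr <;> rw [hr]
      · have e : (quadFace n i h).rotate 0 = quadFace n i h := List.rotate_zero _
        rw [e, quadFace]
        simp only [hc, List.map_cons, List.map_nil]
        simp only [if_neg Bool.false_ne_true, if_pos rfl]
        exact nr4 hBadj hbt1 (Ne.symm hTadj') (Ne.symm hbt0) (Or.inl hdiag)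
      · have e : (quadFace n i h).rotate 1 =
            [(⟨i + 1, h⟩, false), (⟨i + 1, h⟩, true),
             (⟨i, Nat.lt_of_succ_lt h⟩, true), (⟨i, Nat.lt_of_succ_lt h⟩, false)] := by
          rw [List.rotate_eq_drop_append_take (by rw [hql]; omega)]
          rfl
        rw [e]
        simp only [hc, List.map_cons, List.map_nil]
        simp only [if_neg Bool.false_ne_true, if_pos rfl]
        exact nr4 hbt1 (Ne.symm hTadj') (Ne.symm hbt0) hBadj (Or.inr (Ne.symm hdiag))
      · have e : (quadFace n i h).rotate 2 =
            [(⟨i + 1, h⟩, true), (⟨i, Nat.lt_of_succ_lt h⟩, true),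
             (⟨i, Nat.lt_of_succ_lt h⟩, false), (⟨i + 1, h⟩, false)] := by
          rw [List.rotate_eq_drop_append_take (by rw [hql]; omega)]
          rfl
        rw [e]
        simp only [hc, List.map_cons, List.map_nil]
        simp only [if_neg Bool.false_ne_true, if_pos rfl]
        exact nr4 (Ne.symm hTadj') (Ne.symm hbt0) hBadj hbt1 (Or.inl (Ne.symm hdiag))
      · have e : (quadFace n i h).rotate 3 =
            [(⟨i, Nat.lt_of_succ_lt h⟩, true), (⟨i, Nat.lt_of_succ_lt h⟩, false),
             (⟨i + 1, h⟩, false), (⟨i + 1, h⟩, true)] := by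
          rw [List.rotate_eq_drop_append_take (by rw [hql]; omega)]
          rfl
        rw [e]
        simp only [hc, List.map_cons, List.map_nil]
        simp only [if_neg Bool.false_ne_true, if_pos rfl]
        exact nr4 (Ne.symm hbt0) hBadj hbt1 (Ne.symm hTadj') (Or.inr hdiag)
    refine INR_of_infix key ?_
    rw [List.map_take]
    exact (List.take_prefix _ _).isInfix
end
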